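/- arXiv:math/0301133 — 4 statements merged into one kernel-verified Lean document; each statement's English description precedes it below -/
import Mathlib

section
/- A compact Euclidean Coxeter polytope is simple: every vertex of a compact convex polytope in Euclidean n-space all of whose dihedral angles are of the form π/m (m ≥ 2 an integer) is contained in exactly n facets. -/
open scoped RealInnerProductSpace

/-!
Let `x` be a vertex and `z` an interior point. The normals of the facets through `x` span the
space, since otherwise `x` could be moved both ways along a direction orthogonal to all of them
without leaving the polytope. They are pairwise at angle `π - π/m ≥ π/2`, i.e. pairwise obtuse,
and all have positive inner product with `x - z`; such a family is linearly independent.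
Hence they form a basis, and there are exactly `n` of them.
-/

section Obtuse

variable {ι E : Type*} [NormedAddCommGroup E] [InnerProductSpace ℝ E] {v : ι → E}

theorem inner_sum_smul_sum_smul_nonpos (hv : Pairwise fun i j => ⟪v i, v j⟫ ≤ 0)
    (s : Finset ι) {p q : ι → ℝ} (hp : ∀ i, 0 ≤ p i) (hq : ∀ i, 0 ≤ q i)
    (hpq : ∀ i, p i * q i = 0) :
    ⟪∑ i ∈ s, p i • v i, ∑ j ∈ s, q j • v j⟫ ≤ 0 := by
  simp_rw [sum_inner, inner_sum, real_inner_smul_left, real_inner_smul_right]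
  refine Finset.sum_nonpos fun i _ => Finset.sum_nonpos fun j _ => ?_
  rcases eq_or_ne i j with rfl | hij
  · rw [← mul_assoc, hpq, zero_mul]
  · exact mul_nonpos_of_nonneg_of_nonpos (hp i)
      (mul_nonpos_of_nonneg_of_nonpos (hq j) (hv hij))

theorem eq_zero_of_sum_smul_eq_zero_of_inner_pos {w : E} (hw : ∀ i, 0 < ⟪v i, w⟫)
    {s : Finset ι} {p : ι → ℝ} (hp : ∀ i, 0 ≤ p i) (h : ∑ i ∈ s, p i • v i = 0) :
    ∀ i ∈ s, p i = 0 := by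
  have hsum : ∑ i ∈ s, p i * ⟪v i, w⟫ = 0 := by
    simpa only [sum_inner, real_inner_smul_left, inner_zero_left] using congrArg (⟪·, w⟫) h
  intro i hi
  have := (Finset.sum_eq_zero_iff_of_nonneg fun j _ => mul_nonneg (hp j) (hw j).le).1 hsum i hi
  exact (mul_eq_zero.1 this).resolve_right (hw i).ne'

/-- Writing a vanishing combination as `∑ a⁺ • v = ∑ a⁻ • v`, obtuseness makes the common value
have nonpositive square norm, and the vector `w` then forces both sides to have zero coefficients. -/
theorem linearIndependent_of_pairwise_inner_nonpos_of_inner_pos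
    (hv : Pairwise fun i j => ⟪v i, v j⟫ ≤ 0) {w : E} (hw : ∀ i, 0 < ⟪v i, w⟫) :
    LinearIndependent ℝ v := by
  rw [linearIndependent_iff']
  intro s a hsum i hi
  have hdisj : ∀ j, (a j)⁺ * (a j)⁻ = 0 := fun j => by
    rcases le_total 0 (a j) with h | h
    · rw [negPart_eq_zero.2 h, mul_zero]
    · rw [posPart_eq_zero.2 h, zero_mul]
  set y := ∑ j ∈ s, (a j)⁺ • v j
  have hy : y = ∑ j ∈ s, (a j)⁻ • v j := by
    rw [← sub_eq_zero, ← Finset.sum_sub_distrib, ← hsum]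
    simp_rw [← sub_smul, posPart_sub_negPart]
  have hy0 : y = 0 := by
    refine real_inner_self_nonpos.1 ?_
    nth_rw 2 [hy]
    exact inner_sum_smul_sum_smul_nonpos hv s (fun j => posPart_nonneg (a j))
      (fun j => negPart_nonneg (a j)) hdisj
  rw [← posPart_sub_negPart (a i),
    eq_zero_of_sum_smul_eq_zero_of_inner_pos hw (fun j => posPart_nonneg (a j)) hy0 i hi,
    eq_zero_of_sum_smul_eq_zero_of_inner_pos hw (fun j => negPart_nonneg (a j)) (hy ▸ hy0) i hi,
    sub_zero]

end Obtuse

section Polyhedron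

variable {ι E : Type*} [NormedAddCommGroup E] [InnerProductSpace ℝ E] {u : ι → E} {c : ι → ℝ}

theorem inner_lt_of_mem_interior_setOf_inner_le {a z : E} {b : ℝ} (ha : a ≠ 0)
    (hz : z ∈ interior {x | ⟪a, x⟫ ≤ b}) : ⟪a, z⟫ < b := by
  set f : StrongDual ℝ E := innerSL ℝ a
  have hf : f ≠ 0 := fun h => ha (by simpa [f] using congrArg (· a) h)
  have hopen := (f.isOpenMap_of_ne_zero hf).preimage_interior_eq_interior_preimage f.continuous
    (Set.Iic b)
  rw [interior_Iic] at hopen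
  have : z ∈ f ⁻¹' Set.Iio b := by rw [hopen]; exact hz
  simpa [f] using this

theorem linearIndependent_setOf_inner_eq_of_interior_nonempty (hu : ∀ i, u i ≠ 0)
    (hint : (interior {x | ∀ i, ⟪u i, x⟫ ≤ c i}).Nonempty) {x : E}
    (hobtuse : ∀ i j, i ≠ j → ⟪u i, x⟫ = c i → ⟪u j, x⟫ = c j → ⟪u i, u j⟫ ≤ 0) :
    LinearIndependent ℝ (fun i : {i | ⟪u i, x⟫ = c i} => u i) := by
  obtain ⟨z, hz⟩ := hint
  refine linearIndependent_of_pairwise_inner_nonpos_of_inner_pos (w := x - z)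
    (fun i j hij => hobtuse i j (Subtype.coe_ne_coe.2 hij) i.2 j.2) fun i => ?_
  have hzi : ⟪u i, z⟫ < c i := inner_lt_of_mem_interior_setOf_inner_le (hu i)
    (interior_mono (Set.ofPred_subset_ofPred.2 fun _ hy => hy i) hz)
  rw [inner_sub_right, i.2]
  linarith

theorem span_image_setOf_inner_eq_eq_top [Finite ι] {x : E}
    (hx : x ∈ Set.extremePoints ℝ {x | ∀ i, ⟪u i, x⟫ ≤ c i}) :
    Submodule.span ℝ (u '' {i | ⟪u i, x⟫ = c i}) = ⊤ := by
  have := FiniteDimensional.span_of_finite ℝ ((Set.toFinite {i | ⟪u i, x⟫ = c i}).image u)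
  by_contra hne
  obtain ⟨v, hv, hv0⟩ :=
    Submodule.exists_mem_ne_zero_of_ne_bot (mt Submodule.orthogonal_eq_bot_iff.1 hne)
  have hnear : ∀ᶠ t in nhds (0 : ℝ), ∀ i, ⟪u i, x + t • v⟫ ≤ c i := by
    refine Filter.eventually_all.2 fun i => ?_
    rcases (hx.1 i).eq_or_lt with hi | hi
    · have hvi : ⟪u i, v⟫ = 0 := hv _ (Submodule.subset_span ⟨i, hi, rfl⟩)
      exact Filter.Eventually.of_forall fun t => by
        rw [inner_add_right, real_inner_smul_right, hvi, mul_zero, add_zero, hi]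
    · refine (ContinuousAt.eventually_lt (by fun_prop) continuousAt_const ?_).mono
        fun _ => le_of_lt
      simpa using hi
  obtain ⟨ε, hε, hball⟩ := Metric.eventually_nhds_iff.1 hnear
  have hmid : x ∈ openSegment ℝ (x + (ε / 2) • v) (x + (-(ε / 2)) • v) :=
    ⟨1 / 2, 1 / 2, by norm_num, by norm_num, by norm_num, by module⟩
  have := hx.2 (hball (by simpa [abs_of_pos hε] using half_lt_self hε))
    (hball (by simpa [abs_of_pos hε] using half_lt_self hε)) hmid
  simp [hε.ne', hv0] at this

theorem ncard_setOf_inner_eq_eq_finrank [Finite ι] [FiniteDimensional ℝ E] (hu : ∀ i, u i ≠ 0)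
    (hint : (interior {x | ∀ i, ⟪u i, x⟫ ≤ c i}).Nonempty) {x : E}
    (hx : x ∈ Set.extremePoints ℝ {x | ∀ i, ⟪u i, x⟫ ≤ c i})
    (hobtuse : ∀ i j, i ≠ j → ⟪u i, x⟫ = c i → ⟪u j, x⟫ = c j → ⟪u i, u j⟫ ≤ 0) :
    {i | ⟪u i, x⟫ = c i}.ncard = Module.finrank ℝ E := by
  have b := Module.Basis.mk (linearIndependent_setOf_inner_eq_of_interior_nonempty hu hint hobtuse)
    (by rw [← Set.image_eq_range, span_image_setOf_inner_eq_eq_top hx])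
  rw [Module.finrank_eq_nat_card_basis b, Nat.card_coe_set_eq]

end Polyhedron

theorem Real.cos_pi_div_natCast_nonneg {m : ℕ} (hm : 2 ≤ m) : 0 ≤ Real.cos (Real.pi / m) := by
  have hnonneg : 0 ≤ Real.pi / m := div_nonneg Real.pi_pos.le m.cast_nonneg
  refine Real.cos_nonneg_of_mem_Icc ⟨by linarith [Real.pi_pos], ?_⟩
  exact div_le_div_of_nonneg_left Real.pi_pos.le two_pos (by exact_mod_cast hm)

theorem euclidean_coxeter_polytope_is_simple_general {n k : ℕ}
    (u : Fin k → EuclideanSpace ℝ (Fin n)) (c : Fin k → ℝ)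
    (hu : ∀ i, ‖u i‖ = 1)
    (P : Set (EuclideanSpace ℝ (Fin n)))
    (hP : P = {x | ∀ i, ⟪u i, x⟫ ≤ c i})
    (hint : (interior P).Nonempty)
    (hangle : ∀ i j, i ≠ j → (∃ x ∈ P, ⟪u i, x⟫ = c i ∧ ⟪u j, x⟫ = c j) →
      ∃ m : ℕ, 2 ≤ m ∧ ⟪u i, u j⟫ = -Real.cos (Real.pi / m))
    (x : EuclideanSpace ℝ (Fin n)) (hx : x ∈ Set.extremePoints ℝ P) :
    {i : Fin k | ⟪u i, x⟫ = c i}.ncard = n := by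
  subst hP
  have hobtuse : ∀ i j, i ≠ j → ⟪u i, x⟫ = c i → ⟪u j, x⟫ = c j → ⟪u i, u j⟫ ≤ 0 := by
    intro i j hij hi hj
    obtain ⟨m, hm, hcos⟩ := hangle i j hij ⟨x, hx.1, hi, hj⟩
    rw [hcos, neg_nonpos]
    exact Real.cos_pi_div_natCast_nonneg hm
  have hu0 : ∀ i, u i ≠ 0 := fun i => norm_ne_zero_iff.1 (by rw [hu i]; exact one_ne_zero)
  rw [ncard_setOf_inner_eq_eq_finrank hu0 hint hx hobtuse, finrank_euclideanSpace_fin]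

/-- A compact Euclidean Coxeter polytope is simple: if `P ⊆ ℝⁿ` is a compact convex polytope
given by `k` irredundant half-spaces with unit outward normals `u i`, all of whose dihedral
angles are of the form `π / m` with integer `m ≥ 2`, then every vertex (extreme point) of `P`
is contained in exactly `n` facets. -/
theorem euclidean_coxeter_polytope_is_simple {n k : ℕ} (hn : 1 ≤ n)
    (u : Fin k → EuclideanSpace ℝ (Fin n)) (c : Fin k → ℝ)
    (hu : ∀ i, ‖u i‖ = 1)
    (P : Set (EuclideanSpace ℝ (Fin n)))
    (hP : P = {x | ∀ i, ⟪u i, x⟫ ≤ c i})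
    (hcomp : IsCompact P)
    (hint : (interior P).Nonempty)
    (hfacet : ∀ i, ∃ x ∈ P, ⟪u i, x⟫ = c i ∧ ∀ j, j ≠ i → ⟪u j, x⟫ < c j)
    (hangle : ∀ i j, i ≠ j → (∃ x ∈ P, ⟪u i, x⟫ = c i ∧ ⟪u j, x⟫ = c j) →
      ∃ m : ℕ, 2 ≤ m ∧ ⟪u i, u j⟫ = -Real.cos (Real.pi / m))
    (x : EuclideanSpace ℝ (Fin n)) (hx : x ∈ Set.extremePoints ℝ P) :
    {i : Fin k | ⟪u i, x⟫ = c i}.ncard = n :=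
  euclidean_coxeter_polytope_is_simple_general u c hu P hP hint hangle x hx
end

section
/- Let P be an n-dimensional polytope with n+2 facets whose one-dimensional Gale diagram has multiplicities p at −1, q = 1 at 0, and r at +1, with p, r ≥ 2. Then P is combinatorially a pyramid over the product of a (p−1)-simplex and an (r−1)-simplex, and the apex of this pyramid lies on all facets except the one corresponding to the point 0; consequently the apex is contained in n+1 facets and P is not simple. -/
/-- The one-dimensional Gale diagram with `q = 1`: `p` facets at `-1`, `r` facets at `+1`,
and one facet at `0`. -/
def galePointPyr {p r : ℕ} : Fin p ⊕ Fin r ⊕ Fin 1 → ℝ :=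
  Sum.elim (fun _ => -1) (Sum.elim (fun _ => 1) (fun _ => 0))

/-- A set `I` of facets determines a face iff `0` lies in the relative interior of the convex
hull of the Gale points of the facets not in `I`. -/
def IsGaleFacePyr {p r : ℕ} (I : Finset (Fin p ⊕ Fin r ⊕ Fin 1)) : Prop :=
  (0 : ℝ) ∈ intrinsicInterior ℝ (convexHull ℝ (galePointPyr '' {a | a ∉ I}))

/-- The facet sitting at the point `0` of the Gale diagram. -/
def zeroFacet {p r : ℕ} : Fin p ⊕ Fin r ⊕ Fin 1 := Sum.inr (Sum.inr 0)

/-- Faces of the product of a `(p-1)`-simplex with an `(r-1)`-simplex, recorded by facet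
sets: some facet on each side must be omitted. -/
def IsProdFace {p r : ℕ} (J : Finset (Fin p ⊕ Fin r)) : Prop :=
  (∃ i : Fin p, Sum.inl i ∉ J) ∧ (∃ j : Fin r, Sum.inr j ∉ J)

/-! A set of reals has `0` in the relative interior of its convex hull iff it is `{0}` or has
points of both signs. Hence the faces are cut out exactly by the facet sets that miss some facet
at `-1` and some facet at `+1` — the faces of the product of two simplices, each with or without
the facet at `0`, i.e. the faces of the cone over the product — plus the one set missing only the
facet at `0`, which is the apex. -/

open Set

theorem intrinsicInterior_subset_interior_of_affineSpan_eq_top {𝕜 V P : Type*} [Ring 𝕜]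
    [AddCommGroup V] [Module 𝕜 V] [TopologicalSpace P] [AddTorsor V P] {s : Set P}
    (h : affineSpan 𝕜 s = ⊤) : intrinsicInterior 𝕜 s ⊆ interior s := by
  have hopen : IsOpen (affineSpan 𝕜 s : Set P) := by rw [h]; exact isOpen_univ
  exact (hopen.isOpenMap_subtype_val.image_interior_subset _).trans
    (interior_mono (image_preimage_subset _ _))

theorem Real.affineSpan_eq_top_of_ne {s : Set ℝ} {a b : ℝ} (ha : a ∈ s) (hb : b ∈ s)
    (hab : a ≠ b) : affineSpan ℝ s = ⊤ := by
  rw [AffineSubspace.affineSpan_eq_top_iff_vectorSpan_eq_top_of_nonempty ℝ ℝ ℝ ⟨a, ha⟩]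
  exact Ideal.eq_top_of_isUnit_mem _ (vsub_mem_vectorSpan ℝ ha hb) (sub_ne_zero.2 hab).isUnit

theorem zero_mem_intrinsicInterior_convexHull_iff {s : Set ℝ} :
    (0 : ℝ) ∈ intrinsicInterior ℝ (convexHull ℝ s) ↔
      s = {0} ∨ (∃ a ∈ s, a < 0) ∧ ∃ b ∈ s, 0 < b := by
  constructor
  · intro h
    by_cases hs : s = {0}
    · exact Or.inl hs
    have h0 : (0 : ℝ) ∈ convexHull ℝ s := intrinsicInterior_subset h
    obtain ⟨b, hb, hb0⟩ : ∃ b ∈ s, b ≠ 0 := by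
      by_contra! hs'
      have hne : s.Nonempty := convexHull_nonempty_iff.1 ⟨0, h0⟩
      exact hs ((subset_singleton_iff_eq.1 hs').resolve_left hne.ne_empty)
    have hint : (0 : ℝ) ∈ interior (convexHull ℝ s) :=
      intrinsicInterior_subset_interior_of_affineSpan_eq_top
        (Real.affineSpan_eq_top_of_ne h0 (subset_convexHull ℝ s hb) hb0.symm) h
    refine Or.inr ⟨?_, ?_⟩
    · by_contra! hpos
      have := interior_mono (convexHull_min hpos (convex_Ici 0)) hint
      exact (lt_irrefl 0) (interior_Ici.subset this)
    · by_contra! hneg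
      have := interior_mono (convexHull_min hneg (convex_Iic 0)) hint
      exact (lt_irrefl 0) (interior_Iic.subset this)
  · rintro (rfl | ⟨⟨a, ha, ha0⟩, ⟨b, hb, hb0⟩⟩)
    · simp
    · have hseg : Icc a b ⊆ convexHull ℝ s := by
        rw [← segment_eq_Icc (ha0.trans hb0).le]
        exact (convex_convexHull ℝ s).segment_subset (subset_convexHull ℝ s ha)
          (subset_convexHull ℝ s hb)
      exact interior_subset_intrinsicInterior
        (interior_mono hseg (by rw [interior_Icc]; exact ⟨ha0, hb0⟩))

variable {p r : ℕ}

theorem galePointPyr_eq_zero_iff {a : Fin p ⊕ Fin r ⊕ Fin 1} :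
    galePointPyr a = 0 ↔ a = zeroFacet := by
  rcases a with i | j | k <;> simp [galePointPyr, zeroFacet, Fin.fin_one_eq_zero]

theorem exists_neg_mem_galePointPyr_image_iff {I : Finset (Fin p ⊕ Fin r ⊕ Fin 1)} :
    (∃ x ∈ galePointPyr '' {a | a ∉ I}, x < 0) ↔ ∃ i, Sum.inl i ∉ I := by
  simp only [exists_mem_image, mem_ofPred_eq, Sum.exists]
  norm_num [galePointPyr]

theorem exists_pos_mem_galePointPyr_image_iff {I : Finset (Fin p ⊕ Fin r ⊕ Fin 1)} :
    (∃ x ∈ galePointPyr '' {a | a ∉ I}, 0 < x) ↔ ∃ j, Sum.inr (Sum.inl j) ∉ I := by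
  simp only [exists_mem_image, mem_ofPred_eq, Sum.exists]
  norm_num [galePointPyr]

theorem galePointPyr_image_eq_singleton_zero_iff {I : Finset (Fin p ⊕ Fin r ⊕ Fin 1)} :
    galePointPyr '' {a | a ∉ I} = {0} ↔ I = Finset.univ.erase zeroFacet := by
  constructor
  · intro h
    ext a
    have ha : a ∉ I → a = zeroFacet := fun ha ↦
      galePointPyr_eq_zero_iff.1 (h.subset (mem_image_of_mem _ ha))
    obtain ⟨b, hb, hb0⟩ := h.symm.subset (mem_singleton 0)
    rw [galePointPyr_eq_zero_iff] at hb0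
    subst hb0
    rw [Finset.mem_erase]
    exact ⟨fun haI ↦ ⟨fun h ↦ hb (h ▸ haI), Finset.mem_univ a⟩,
      fun ⟨hne, _⟩ ↦ by_contra fun haI ↦ hne (ha haI)⟩
  · rintro rfl
    ext x
    simp [galePointPyr, zeroFacet]

theorem isGaleFacePyr_iff {I : Finset (Fin p ⊕ Fin r ⊕ Fin 1)} :
    IsGaleFacePyr I ↔
      I = Finset.univ.erase zeroFacet ∨ (∃ i, Sum.inl i ∉ I) ∧ ∃ j, Sum.inr (Sum.inl j) ∉ I := by
  rw [IsGaleFacePyr, zero_mem_intrinsicInterior_convexHull_iff,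
    galePointPyr_image_eq_singleton_zero_iff, exists_neg_mem_galePointPyr_image_iff,
    exists_pos_mem_galePointPyr_image_iff]

def baseApexOrderIso {α β : Type*} : Finset (α ⊕ β ⊕ Fin 1) ≃o Finset (α ⊕ β) × Bool where
  toFun I := (I.toLeft.disjSum I.toRight.toLeft, decide (0 ∈ I.toRight.toRight))
  invFun J := J.1.toLeft.disjSum (J.1.toRight.disjSum (if J.2 then Finset.univ else ∅))
  left_inv I := by
    ext (a | b | c)
    · simp
    · simp
    · by_cases h : Sum.inr (Sum.inr 0) ∈ I <;> simp [h, Fin.fin_one_eq_zero c]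
  right_inv J := by
    obtain ⟨J, _ | _⟩ := J <;> ext (a | b) <;> simp
  map_rel_iff' := by
    simp [Prod.mk_le_mk, Bool.le_iff_imp, ← Finset.coe_subset, Set.subset_def, Sum.forall,
      Fin.forall_fin_one, and_assoc]

theorem baseApexOrderIso_symm_univ_false :
    baseApexOrderIso.symm (Finset.univ, false) =
      Finset.univ.erase (zeroFacet (p := p) (r := r)) := by
  ext (a | b | c) <;> simp [baseApexOrderIso, zeroFacet, Fin.fin_one_eq_zero]

theorem isGaleFacePyr_iff_baseApexOrderIso {I : Finset (Fin p ⊕ Fin r ⊕ Fin 1)} :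
    IsGaleFacePyr I ↔ IsProdFace (baseApexOrderIso I).1 ∨
      ((baseApexOrderIso I).2 = false ∧ (baseApexOrderIso I).1 = Finset.univ) := by
  rw [isGaleFacePyr_iff, or_comm, ← baseApexOrderIso_symm_univ_false, OrderIso.eq_symm_apply]
  simp [IsProdFace, baseApexOrderIso, Prod.ext_iff, and_comm]

def galeFaceOrderIso : {I : Finset (Fin p ⊕ Fin r ⊕ Fin 1) // IsGaleFacePyr I} ≃o
    {Jb : Finset (Fin p ⊕ Fin r) × Bool //
      IsProdFace Jb.1 ∨ (Jb.2 = false ∧ Jb.1 = Finset.univ)} where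
  toEquiv := baseApexOrderIso.toEquiv.subtypeEquiv fun _ ↦ isGaleFacePyr_iff_baseApexOrderIso
  map_rel_iff' := baseApexOrderIso.le_iff_le

theorem eq_of_isGaleFacePyr_of_univ_erase_zeroFacet_subset {J : Finset (Fin p ⊕ Fin r ⊕ Fin 1)}
    (hJ : IsGaleFacePyr J) (h : Finset.univ.erase zeroFacet ⊆ J) :
    J = Finset.univ.erase zeroFacet := by
  rcases isGaleFacePyr_iff.1 hJ with hJ | ⟨⟨i, hi⟩, -⟩
  · exact hJ
  · exact absurd (h (by simp [zeroFacet])) hi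

theorem card_univ_erase_zeroFacet :
    (Finset.univ.erase (zeroFacet (p := p) (r := r))).card = p + r := by
  simp [Finset.card_erase_of_mem]

theorem gale_q_one_is_pyramid_general {n p r : ℕ}
    (hpr : p + 1 + r = n + 2) :
    Nonempty (({I : Finset (Fin p ⊕ Fin r ⊕ Fin 1) // IsGaleFacePyr I}) ≃o
      ({Jb : Finset (Fin p ⊕ Fin r) × Bool //
          IsProdFace Jb.1 ∨ (Jb.2 = false ∧ Jb.1 = Finset.univ)})) ∧
    IsGaleFacePyr (Finset.univ.erase (zeroFacet (p := p) (r := r))) ∧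
    (Finset.univ.erase (zeroFacet (p := p) (r := r))).card = n + 1 ∧
    (∀ J, IsGaleFacePyr J → Finset.univ.erase (zeroFacet (p := p) (r := r)) ⊆ J →
      J = Finset.univ.erase (zeroFacet (p := p) (r := r))) ∧
    ¬ (∀ I : Finset (Fin p ⊕ Fin r ⊕ Fin 1), IsGaleFacePyr I →
        (∀ J, IsGaleFacePyr J → I ⊆ J → J = I) → I.card = n) := by
  have hapex : IsGaleFacePyr (Finset.univ.erase (zeroFacet (p := p) (r := r))) :=
    isGaleFacePyr_iff.2 (Or.inl rfl)
  have hcard : (Finset.univ.erase (zeroFacet (p := p) (r := r))).card = n + 1 := by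
    rw [card_univ_erase_zeroFacet]
    omega
  refine ⟨⟨galeFaceOrderIso⟩, hapex, hcard,
    fun _ ↦ eq_of_isGaleFacePyr_of_univ_erase_zeroFacet_subset, fun hsimple ↦ ?_⟩
  have := hsimple _ hapex fun _ ↦ eq_of_isGaleFacePyr_of_univ_erase_zeroFacet_subset
  omega

/-- An `n`-polytope with `n + 2` facets whose one-dimensional Gale diagram has multiplicities
`p` at `-1`, `q = 1` at `0` and `r` at `+1` (`p, r ≥ 2`, `p + 1 + r = n + 2`) is a pyramid
over the product of a `(p-1)`-simplex and an `(r-1)`-simplex: its face poset is isomorphic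
to the face poset of such a pyramid (faces of the cone over the product, distinguished by
whether they lie in the base, plus the apex `(univ, false)`); moreover the apex — the face
lying on all facets except the one at `0` — is a vertex contained in exactly `n + 1` facets,
so `P` is not simple. -/
theorem gale_q_one_is_pyramid {n p r : ℕ}
    (hp : 2 ≤ p) (hr : 2 ≤ r) (hpr : p + 1 + r = n + 2) :
    Nonempty (({I : Finset (Fin p ⊕ Fin r ⊕ Fin 1) // IsGaleFacePyr I}) ≃o
      ({Jb : Finset (Fin p ⊕ Fin r) × Bool //
          IsProdFace Jb.1 ∨ (Jb.2 = false ∧ Jb.1 = Finset.univ)})) ∧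
    IsGaleFacePyr (Finset.univ.erase (zeroFacet (p := p) (r := r))) ∧
    (Finset.univ.erase (zeroFacet (p := p) (r := r))).card = n + 1 ∧
    (∀ J, IsGaleFacePyr J → Finset.univ.erase (zeroFacet (p := p) (r := r)) ⊆ J →
      J = Finset.univ.erase (zeroFacet (p := p) (r := r))) ∧
    ¬ (∀ I : Finset (Fin p ⊕ Fin r ⊕ Fin 1), IsGaleFacePyr I →
        (∀ J, IsGaleFacePyr J → I ⊆ J → J = I) → I.card = n) :=
  gale_q_one_is_pyramid_general hpr
end

section
/- Let Σ be a Coxeter diagram on n+2 nodes that is the union of two quasi-Lannér subdiagrams L₁ and L₂ whose intersection is a single node v, such that L₁∖v and L₂∖v are parabolic of ranks summing to n−1, are non-adjacent in Σ, every subdiagram of L_i other than L_i∖v (and L_i itself) is elliptic, and for all v₁ ∈ L₁∖v, v₂ ∈ L₂∖v the diagram Σ∖{v₁,v₂} is elliptic or parabolic. Then the Gram matrix G(Σ) has determinant 0 and inertia (n, 1, 1). -/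
open Matrix

/-- The principal submatrix of `A` on the index set `S`. -/
def subm {k : ℕ} (A : Matrix (Fin k) (Fin k) ℝ) (S : Finset (Fin k)) : Matrix ↥S ↥S ℝ :=
  A.submatrix (fun i => (i : Fin k)) (fun i => (i : Fin k))

/-- A parabolic subdiagram on the index set `S`: the principal submatrix is positive
semidefinite and every node lies in the support of a kernel vector (each connected
component is singular). -/
def IsParabolic {k : ℕ} (G : Matrix (Fin k) (Fin k) ℝ) (S : Finset (Fin k)) : Prop :=
  (subm G S).PosSemidef ∧ ∀ i : ↥S, ∃ x : ↥S → ℝ, (subm G S).mulVec x = 0 ∧ x i ≠ 0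

/-- Number of positive eigenvalues of a real symmetric matrix. -/
noncomputable def posIndex {m : Type*} [Fintype m] [DecidableEq m] {A : Matrix m m ℝ}
    (hA : A.IsHermitian) : ℕ := (Finset.univ.filter fun i => 0 < hA.eigenvalues i).card

/-- Number of negative eigenvalues of a real symmetric matrix. -/
noncomputable def negIndex {m : Type*} [Fintype m] [DecidableEq m] {A : Matrix m m ℝ}
    (hA : A.IsHermitian) : ℕ := (Finset.univ.filter fun i => hA.eigenvalues i < 0).card

/-- Dimension of the kernel (number of zero eigenvalues) of a real symmetric matrix. -/
noncomputable def nullIndex {m : Type*} [Fintype m] [DecidableEq m] {A : Matrix m m ℝ}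
    (hA : A.IsHermitian) : ℕ := (Finset.univ.filter fun i => hA.eigenvalues i = 0).card


/-!
Put `Aᵢ = Lᵢ ∖ v`. By the rank condition each parabolic `Aᵢ` has a one-dimensional kernel,
spanned by some `zᵢ`, and since `Aᵢ` meets the rest of `Σ` only through `v`, `G zᵢ = sᵢ e_v`.
Here `sᵢ ≠ 0`: otherwise `zᵢ` is a kernel vector of `Lᵢ` with `zᵢ p ≠ 0` for some `p ∈ Aᵢ`, and
subtracting multiples of `zᵢ` reduces the form on `Lᵢ` to the form on the elliptic `Lᵢ ∖ p`,
making `Lᵢ` positive semidefinite. So `y = s₂ z₁ - s₁ z₂` is a kernel vector of `G`, and a kernel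
vector vanishing at `p₁ ∈ A₁` is zero: pairing it with `z₁` kills its `v`-coordinate, after which
it splits into multiples of `z₁` and `z₂`. On `{x p₁ = x p₂ = 0}`, of codimension at most two and
meeting the kernel trivially, the form is nonnegative because `Σ ∖ {p₁, p₂}` is elliptic or
parabolic. With the negative direction coming from `L₁`, only the inertia `(n, 1, 1)` remains.
-/

open Finset Module Function

theorem Matrix.IsHermitian.mulVec_dotProduct {m : Type*} [Fintype m] {B : Matrix m m ℝ}
    (hB : B.IsHermitian) (x y : m → ℝ) : B *ᵥ x ⬝ᵥ y = x ⬝ᵥ B *ᵥ y := by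
  rw [dotProduct_mulVec, ← mulVec_transpose, ← conjTranspose_eq_transpose_of_trivial, hB]

namespace Matrix.IsHermitian

variable {m : Type*} [Fintype m] [DecidableEq m] {B : Matrix m m ℝ} (hB : B.IsHermitian)

theorem posIndex_add_negIndex_add_nullIndex :
    posIndex hB + negIndex hB + nullIndex hB = Fintype.card m := by
  simp only [posIndex, negIndex, nullIndex, card_filter, ← sum_add_distrib]
  rw [← card_univ, card_eq_sum_ones]
  refine sum_congr rfl fun i _ => ?_
  rcases lt_trichotomy (hB.eigenvalues i) 0 with h | h | h
  · simp [h, h.not_gt, h.ne]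
  · simp [h]
  · simp [h, h.not_gt, h.ne']

theorem nullIndex_eq_finrank_ker : nullIndex hB = finrank ℝ (LinearMap.ker B.mulVecLin) := by
  have hrank : B.rank + finrank ℝ (LinearMap.ker B.mulVecLin) = Fintype.card m := by
    rw [Matrix.rank, LinearMap.finrank_range_add_finrank_ker, finrank_fintype_fun_eq_card]
  have hsplit := card_filter_add_card_filter_not (s := univ) (fun i => hB.eigenvalues i ≠ 0)
  rw [hB.rank_eq_card_non_zero_eigs, Fintype.card_subtype] at hrank
  simp only [not_not, card_univ] at hsplit
  rw [nullIndex]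
  omega

theorem one_le_negIndex (h : ¬ B.PosSemidef) : 1 ≤ negIndex hB := by
  rw [hB.posSemidef_iff_eigenvalues_nonneg] at h
  obtain ⟨i, hi⟩ := not_forall.mp h
  exact card_pos.mpr ⟨i, mem_filter.mpr ⟨mem_univ i, not_le.mp hi⟩⟩

theorem dotProduct_mulVec_eq_sum_eigenvalues (x : m → ℝ) :
    x ⬝ᵥ B *ᵥ x =
      ∑ i, hB.eigenvalues i * ((hB.eigenvectorUnitary : Matrix m m ℝ)ᵀ *ᵥ x) i ^ 2 := by
  set U : Matrix m m ℝ := (hB.eigenvectorUnitary : Matrix m m ℝ)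
  have hB' : B = U * diagonal hB.eigenvalues * Uᵀ := hB.spectral_theorem
  conv_lhs => rw [hB']
  rw [← mulVec_mulVec, ← mulVec_mulVec, dotProduct_mulVec, ← mulVec_transpose, dotProduct]
  exact sum_congr rfl fun i _ => by rw [mulVec_diagonal]; ring

/-- Reading off the coordinates along eigenvectors with nonnegative eigenvalue is injective on `W`:
a vector without such coordinates has negative form unless it is zero. -/
theorem negIndex_add_finrank_le (W : Submodule ℝ (m → ℝ)) (hW : ∀ x ∈ W, 0 ≤ x ⬝ᵥ B *ᵥ x) :
    negIndex hB + finrank ℝ W ≤ Fintype.card m := by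
  set U : Matrix m m ℝ := (hB.eigenvectorUnitary : Matrix m m ℝ)
  have hU : U * Uᵀ = 1 := mem_unitaryGroup_iff.mp hB.eigenvectorUnitary.2
  let f : W →ₗ[ℝ] ({i // ¬ hB.eigenvalues i < 0} → ℝ) :=
    LinearMap.funLeft ℝ ℝ Subtype.val ∘ₗ Uᵀ.mulVecLin ∘ₗ W.subtype
  have hf : Function.Injective f := by
    rw [← LinearMap.ker_eq_bot, Submodule.eq_bot_iff]
    rintro ⟨x, hx⟩ hfx
    have hc : ∀ i, ¬ hB.eigenvalues i < 0 → (Uᵀ *ᵥ x) i = 0 := fun i hi =>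
      congrFun hfx ⟨i, hi⟩
    have hterm : ∀ i, hB.eigenvalues i * (Uᵀ *ᵥ x) i ^ 2 ≤ 0 := fun i => by
      by_cases hi : hB.eigenvalues i < 0
      · exact mul_nonpos_of_nonpos_of_nonneg hi.le (sq_nonneg _)
      · simp [hc i hi]
    have hsum : ∑ i, hB.eigenvalues i * (Uᵀ *ᵥ x) i ^ 2 = 0 :=
      le_antisymm (sum_nonpos fun i _ => hterm i)
        (hB.dotProduct_mulVec_eq_sum_eigenvalues x ▸ hW x hx)
    have hzero : Uᵀ *ᵥ x = 0 := funext fun i => by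
      by_cases hi : hB.eigenvalues i < 0
      · have := (sum_eq_zero_iff_of_nonpos fun i _ => hterm i).mp hsum i (mem_univ i)
        simpa [hi.ne] using this
      · exact hc i hi
    have : x = 0 := by rw [← one_mulVec x, ← hU, ← mulVec_mulVec, hzero, mulVec_zero]
    simpa using this
  have hcard := card_filter_add_card_filter_not (s := univ) (fun i => hB.eigenvalues i < 0)
  have := LinearMap.finrank_le_finrank_of_injective hf
  rw [finrank_fintype_fun_eq_card, Fintype.card_subtype] at this
  rw [card_univ] at hcard
  rw [negIndex]
  omega

theorem negIndex_add_nullIndex_add_finrank_le (W : Submodule ℝ (m → ℝ))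
    (hW : ∀ x ∈ W, 0 ≤ x ⬝ᵥ B *ᵥ x) (hWker : W ⊓ LinearMap.ker B.mulVecLin = ⊥) :
    negIndex hB + nullIndex hB + finrank ℝ W ≤ Fintype.card m := by
  have hsup : ∀ x ∈ W ⊔ LinearMap.ker B.mulVecLin, 0 ≤ x ⬝ᵥ B *ᵥ x := by
    intro x hx
    obtain ⟨w, hw, k, hk, rfl⟩ := Submodule.mem_sup.mp hx
    have hBk : B *ᵥ k = 0 := hk
    rw [mulVec_add, hBk, add_zero, add_dotProduct, ← hB.mulVec_dotProduct k, hBk,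
      zero_dotProduct, add_zero]
    exact hW w hw
  have hdim := Submodule.finrank_sup_add_finrank_inf_eq W (LinearMap.ker B.mulVecLin)
  rw [hWker, finrank_bot, add_zero] at hdim
  have := hB.negIndex_add_finrank_le _ hsup
  rw [nullIndex_eq_finrank_ker]
  omega

theorem inertia_eq_of_nonneg_of_finrank_add_two (hnpsd : ¬ B.PosSemidef) {y : m → ℝ}
    (hy0 : y ≠ 0) (hy : B *ᵥ y = 0) (W : Submodule ℝ (m → ℝ))
    (hW : ∀ x ∈ W, 0 ≤ x ⬝ᵥ B *ᵥ x) (hWker : W ⊓ LinearMap.ker B.mulVecLin = ⊥)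
    (hdim : Fintype.card m ≤ finrank ℝ W + 2) :
    posIndex hB + 2 = Fintype.card m ∧ negIndex hB = 1 ∧ nullIndex hB = 1 := by
  have hneg := hB.one_le_negIndex hnpsd
  have hnull : 1 ≤ nullIndex hB := by
    rw [nullIndex_eq_finrank_ker]
    exact Submodule.one_le_finrank_iff.mpr ((Submodule.ne_bot_iff _).mpr ⟨y, hy, hy0⟩)
  have htotal := hB.posIndex_add_negIndex_add_nullIndex
  have hbound := hB.negIndex_add_nullIndex_add_finrank_le W hW hWker
  omega

end Matrix.IsHermitian

theorem card_le_finrank_ker_prod_proj_add_two {K m : Type*} [Field K] [Fintype m] (p₁ p₂ : m) :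
    Fintype.card m ≤
      finrank K (LinearMap.ker ((LinearMap.proj p₁).prod (LinearMap.proj p₂) :
        (m → K) →ₗ[K] K × K)) + 2 := by
  have h := LinearMap.finrank_range_add_finrank_ker
    ((LinearMap.proj p₁).prod (LinearMap.proj p₂) : (m → K) →ₗ[K] K × K)
  have hr := Submodule.finrank_le (LinearMap.range
    ((LinearMap.proj p₁).prod (LinearMap.proj p₂) : (m → K) →ₗ[K] K × K))
  rw [finrank_fintype_fun_eq_card] at h
  rw [finrank_prod, finrank_self] at hr
  omega

section Support

variable {ι : Type*} [Fintype ι]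

theorem sum_coe_sort_eq_sum_univ {M : Type*} [AddCommMonoid M] {S : Finset ι} {f : ι → M}
    (hf : ∀ j ∉ S, f j = 0) : ∑ j : S, f j = ∑ j, f j := by
  rw [sum_coe_sort]
  exact sum_subset (subset_univ S) fun j _ hj => hf j hj

theorem dotProduct_eq_zero_of_support_subset {R : Type*} [NonUnitalNonAssocSemiring R]
    {S : Finset ι} {x y : ι → R} (hx : support x ⊆ S) (hy : ∀ j ∈ S, y j = 0) : x ⬝ᵥ y = 0 :=
  sum_eq_zero fun j _ => by
    by_cases hj : j ∈ S
    · rw [hy j hj, mul_zero]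
    · rw [notMem_support.mp fun h => hj (hx h), zero_mul]

theorem mem_erase_of_notMem_of_union_eq_univ [DecidableEq ι] {L₁ L₂ : Finset ι} {v j : ι}
    (hunion : L₁ ∪ L₂ = univ) (hv : v ∈ L₁) (hj : j ∉ L₁) : j ∈ L₂.erase v :=
  mem_erase.mpr ⟨fun h => hj (h ▸ hv), (mem_union.mp (hunion ▸ mem_univ j)).resolve_left hj⟩

end Support

section Subdiagram

variable {k : ℕ} (G : Matrix (Fin k) (Fin k) ℝ) {S : Finset (Fin k)}

theorem subm_mulVec_restrict {y : Fin k → ℝ} (hy : support y ⊆ S) (i : S) :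
    (subm G S *ᵥ fun j : S => y j) i = (G *ᵥ y) i :=
  sum_coe_sort_eq_sum_univ (f := fun j => G i j * y j) fun j hj => by
    rw [notMem_support.mp fun h => hj (hy h), mul_zero]

theorem dotProduct_subm_mulVec_restrict {y : Fin k → ℝ} (hy : support y ⊆ S) :
    (fun j : S => y j) ⬝ᵥ subm G S *ᵥ (fun j : S => y j) = y ⬝ᵥ G *ᵥ y := by
  simp only [dotProduct, subm_mulVec_restrict G hy]
  exact sum_coe_sort_eq_sum_univ (f := fun j => y j * (G *ᵥ y) j) fun j hj => by
    rw [notMem_support.mp fun h => hj (hy h), zero_mul]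

theorem support_extend_subset (x : S → ℝ) : support (extend Subtype.val x 0) ⊆ S := by
  intro j hj
  by_contra hjS
  exact hj (extend_apply' _ _ _ fun ⟨i, hi⟩ => hjS (hi ▸ i.2))

theorem restrict_extend (x : S → ℝ) : (fun j : S => extend Subtype.val x 0 j) = x :=
  funext fun j => Subtype.val_injective.extend_apply x 0 j

theorem extend_restrict {w : Fin k → ℝ} (hw : support w ⊆ S) :
    extend Subtype.val (fun j : S => w j) 0 = w := by
  funext j
  by_cases hj : j ∈ S
  · exact Subtype.val_injective.extend_apply (fun j : S => w j) 0 ⟨j, hj⟩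
  · rw [extend_apply' _ _ _ fun ⟨i, hi⟩ => hj (hi ▸ i.2), notMem_support.mp fun h => hj (hw h)]
    rfl

theorem posSemidef_subm_iff (hG : G.IsHermitian) :
    (subm G S).PosSemidef ↔ ∀ y : Fin k → ℝ, support y ⊆ S → 0 ≤ y ⬝ᵥ G *ᵥ y := by
  refine ⟨fun h y hy => ?_, fun h => .of_dotProduct_mulVec_nonneg (hG.submatrix _) fun x => ?_⟩
  · simpa [dotProduct_subm_mulVec_restrict G hy] using h.dotProduct_mulVec_nonneg fun j : S => y j
  · have := h _ (support_extend_subset x)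
    rwa [← dotProduct_subm_mulVec_restrict G (support_extend_subset x), restrict_extend] at this

noncomputable def kerOn (G : Matrix (Fin k) (Fin k) ℝ) (S : Finset (Fin k)) :
    Submodule ℝ (Fin k → ℝ) :=
  (LinearMap.ker (subm G S).mulVecLin).map (ExtendByZero.linearMap ℝ Subtype.val)

theorem mem_kerOn {w : Fin k → ℝ} :
    w ∈ kerOn G S ↔ support w ⊆ S ∧ ∀ j ∈ S, (G *ᵥ w) j = 0 := by
  constructor
  · rintro ⟨x, hx, rfl⟩
    refine ⟨support_extend_subset x, fun j hj => ?_⟩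
    have := congrFun (LinearMap.mem_ker.mp hx) ⟨j, hj⟩
    rwa [mulVecLin_apply, ← restrict_extend x,
      subm_mulVec_restrict G (support_extend_subset x)] at this
  · rintro ⟨hw, hGw⟩
    refine ⟨fun j : S => w j, LinearMap.mem_ker.mpr (funext fun i => ?_), extend_restrict hw⟩
    rw [mulVecLin_apply, subm_mulVec_restrict G hw, hGw i i.2]
    rfl

theorem finrank_kerOn :
    finrank ℝ (kerOn G S) = finrank ℝ (LinearMap.ker (subm G S).mulVecLin) :=
  (Submodule.equivMapOfInjective _
    (extend_injective Subtype.val_injective (0 : Fin k → ℝ)) _).finrank_eq.symm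

theorem rank_add_finrank_kerOn (S : Finset (Fin k)) :
    (subm G S).rank + finrank ℝ (kerOn G S) = S.card := by
  rw [finrank_kerOn, Matrix.rank, LinearMap.finrank_range_add_finrank_ker,
    finrank_fintype_fun_eq_card, Fintype.card_coe]

end Subdiagram

section Diagram

variable {k : ℕ} {G : Matrix (Fin k) (Fin k) ℝ}

theorem kerOn_eq_span_singleton {S : Finset (Fin k)} (hS : finrank ℝ (kerOn G S) = 1)
    {z : Fin k → ℝ} (hz : z ∈ kerOn G S) (hz0 : z ≠ 0) : kerOn G S = ℝ ∙ z :=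
  (Submodule.eq_of_le_of_finrank_le ((Submodule.span_singleton_le_iff_mem _ _).mpr hz)
    (by rw [finrank_span_singleton hz0, hS])).symm

theorem IsParabolic.one_le_finrank_kerOn {S : Finset (Fin k)} (hpar : IsParabolic G S)
    (hS : S.Nonempty) : 1 ≤ finrank ℝ (kerOn G S) := by
  obtain ⟨p, hp⟩ := hS
  obtain ⟨x, hx, hxp⟩ := hpar.2 ⟨p, hp⟩
  refine Submodule.one_le_finrank_iff.mpr ((Submodule.ne_bot_iff _).mpr
    ⟨_, ⟨x, LinearMap.mem_ker.mpr hx, rfl⟩, fun h => hxp ?_⟩)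
  rw [← Subtype.val_injective.extend_apply x 0 ⟨p, hp⟩]
  exact congrFun h p

theorem erase_nonempty_of_not_posSemidef (hdiag : ∀ i, G i i = 1) {L : Finset (Fin k)}
    {v : Fin k} (hv : v ∈ L) (hL : ¬ (subm G L).PosSemidef) : (L.erase v).Nonempty := by
  rw [nonempty_iff_ne_empty, Ne, erase_eq_empty_iff, not_or]
  refine ⟨ne_empty_of_mem hv, ?_⟩
  rintro rfl
  refine hL (Eq.subst (motive := PosSemidef) ?_ PosSemidef.one)
  ext i j
  rw [Subsingleton.elim i j, one_apply_eq]
  exact (hdiag _).symm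

theorem dotProduct_mulVec_nonneg_of_apply_eq_zero (hG : G.IsHermitian) {p₁ p₂ : Fin k}
    (h : (subm G ((univ.erase p₁).erase p₂)).PosSemidef)
    {x : Fin k → ℝ} (hx₁ : x p₁ = 0) (hx₂ : x p₂ = 0) : 0 ≤ x ⬝ᵥ G *ᵥ x :=
  (posSemidef_subm_iff G hG).mp h x fun j hj =>
    mem_erase.mpr ⟨fun h => hj (h ▸ hx₂), mem_erase.mpr ⟨fun h => hj (h ▸ hx₁), mem_univ j⟩⟩

/-- `z` is `G`-orthogonal to every vector supported on `L`, so clearing the `p`-coordinate of such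
a vector by a multiple of `z` does not change its form. -/
theorem posSemidef_subm_of_erase (hG : G.IsHermitian) {L : Finset (Fin k)} {p : Fin k}
    {z : Fin k → ℝ} (hz : support z ⊆ L) (hGz : ∀ j ∈ L, (G *ᵥ z) j = 0) (hzp : z p ≠ 0)
    (hpsd : (subm G (L.erase p)).PosSemidef) : (subm G L).PosSemidef := by
  rw [posSemidef_subm_iff G hG] at hpsd ⊢
  intro u hu
  set w := u - (u p / z p) • z with hw
  have hwL : support w ⊆ L.erase p := by
    intro j hj
    refine mem_erase.mpr ⟨?_, ?_⟩
    · rintro rfl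
      exact hj (by simp [hw, hzp])
    · by_contra hjL
      exact hj (by simp [hw, notMem_support.mp fun h => hjL (hu h),
        notMem_support.mp fun h => hjL (hz h)])
  have hGzu : z ⬝ᵥ G *ᵥ u = 0 := by
    rw [← hG.mulVec_dotProduct, dotProduct_comm]
    exact dotProduct_eq_zero_of_support_subset hu hGz
  have hGzz : z ⬝ᵥ G *ᵥ z = 0 := dotProduct_eq_zero_of_support_subset hz hGz
  have hGuz : u ⬝ᵥ G *ᵥ z = 0 := dotProduct_eq_zero_of_support_subset hu hGz
  have : w ⬝ᵥ G *ᵥ w = u ⬝ᵥ G *ᵥ u := by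
    simp [hw, mulVec_sub, mulVec_smul, dotProduct_sub, sub_dotProduct, hGzu, hGzz, hGuz]
  exact this ▸ hpsd w hwL

theorem mulVec_apex_ne_zero (hG : G.IsHermitian) {L : Finset (Fin k)} {v p : Fin k}
    (hv : v ∈ L) (hp : p ∈ L.erase v)
    (hell : ∀ S ⊆ L, S ≠ L → S ≠ L.erase v → (subm G S).PosDef)
    (hql : ¬ (subm G L).PosSemidef) {z : Fin k → ℝ} (hz : z ∈ kerOn G (L.erase v))
    (hzp : z p ≠ 0) : (G *ᵥ z) v ≠ 0 := by
  rw [mem_kerOn] at hz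
  intro hzv
  have hpL := mem_of_mem_erase hp
  have hvp : v ∈ L.erase p := mem_erase.mpr ⟨(ne_of_mem_erase hp).symm, hv⟩
  refine hql (posSemidef_subm_of_erase hG (hz.1.trans (coe_subset.mpr (erase_subset v L)))
    (fun j hj => ?_) hzp (hell _ (erase_subset p L) (fun h => notMem_erase p L (by rwa [h]))
      (fun h => notMem_erase v L (by rwa [← h]))).posSemidef)
  by_cases hjv : j = v
  · rwa [hjv]
  · exact hz.2 j (mem_erase.mpr ⟨hjv, hj⟩)

theorem mulVec_eq_single_of_mem_kerOn {L : Finset (Fin k)} {v : Fin k}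
    (hnonadj : ∀ j ∉ L, ∀ i ∈ L.erase v, G j i = 0) {z : Fin k → ℝ}
    (hz : z ∈ kerOn G (L.erase v)) : G *ᵥ z = Pi.single v ((G *ᵥ z) v) := by
  rw [mem_kerOn] at hz
  funext j
  by_cases hjv : j = v
  · rw [hjv, Pi.single_eq_same]
  rw [Pi.single_eq_of_ne hjv]
  by_cases hjL : j ∈ L
  · exact hz.2 j (mem_erase.mpr ⟨hjv, hjL⟩)
  · rw [mulVec, dotProduct_comm]
    exact dotProduct_eq_zero_of_support_subset hz.1 (hnonadj j hjL)

theorem indicator_mem_kerOn_of_mulVec_eq_zero (hG : G.IsHermitian) {v : Fin k}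
    {A₁ A₂ : Finset (Fin k)} (hcover : ∀ j, j ≠ v → j ∉ A₁ → j ∈ A₂)
    (hnonadj : ∀ i ∈ A₁, ∀ j ∈ A₂, G i j = 0) {z : Fin k → ℝ} (hz : G *ᵥ z = 0)
    (hzv : z v = 0) :
    (A₁ : Set (Fin k)).indicator z ∈ kerOn G A₁ ∧
      z - (A₁ : Set (Fin k)).indicator z ∈ kerOn G A₂ := by
  set w₁ := (A₁ : Set (Fin k)).indicator z
  have hw₂ : support (z - w₁) ⊆ A₂ := by
    intro j hj
    by_contra hjA₂
    by_cases hjA₁ : j ∈ A₁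
    · exact hj (by simp [w₁, hjA₁])
    · obtain rfl : j = v := by_contra fun h => hjA₂ (hcover j h hjA₁)
      exact hj (by simp [w₁, hjA₁, hzv])
  refine ⟨(mem_kerOn G).mpr ⟨Set.support_indicator_subset, fun i hi => ?_⟩,
    (mem_kerOn G).mpr ⟨hw₂, fun j hj => ?_⟩⟩
  · have : (G *ᵥ (z - w₁)) i = 0 := by
      rw [mulVec, dotProduct_comm]
      exact dotProduct_eq_zero_of_support_subset hw₂ (hnonadj i hi)
    rwa [mulVec_sub, hz, Pi.sub_apply, Pi.zero_apply, zero_sub, neg_eq_zero] at this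
  · have : (G *ᵥ w₁) j = 0 := by
      rw [mulVec, dotProduct_comm]
      exact dotProduct_eq_zero_of_support_subset Set.support_indicator_subset
        fun i hi => by simpa using (hG.apply i j).trans (hnonadj i hi j hj)
    rw [mulVec_sub, hz, Pi.sub_apply, this, Pi.zero_apply, sub_zero]

theorem eq_zero_of_mulVec_eq_zero_of_apply_eq_zero (hG : G.IsHermitian) {v p : Fin k}
    {A₁ A₂ : Finset (Fin k)} (hcover : ∀ j, j ≠ v → j ∉ A₁ → j ∈ A₂)
    (hnonadj : ∀ i ∈ A₁, ∀ j ∈ A₂, G i j = 0) {z₁ z₂ : Fin k → ℝ} {s₁ s₂ : ℝ}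
    (hspan₁ : kerOn G A₁ = ℝ ∙ z₁) (hspan₂ : kerOn G A₂ = ℝ ∙ z₂)
    (hGz₁ : G *ᵥ z₁ = Pi.single v s₁) (hGz₂ : G *ᵥ z₂ = Pi.single v s₂)
    (hs₁ : s₁ ≠ 0) (hs₂ : s₂ ≠ 0) (hp : p ∈ A₁) (hz₁p : z₁ p ≠ 0)
    {z : Fin k → ℝ} (hz : G *ᵥ z = 0) (hzp : z p = 0) : z = 0 := by
  have hzv : z v = 0 := by
    have := hG.mulVec_dotProduct z₁ z
    rw [hGz₁, hz, single_dotProduct, dotProduct_zero] at this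
    exact (mul_eq_zero.mp this).resolve_left hs₁
  obtain ⟨hw₁, hw₂⟩ := indicator_mem_kerOn_of_mulVec_eq_zero hG hcover hnonadj hz hzv
  obtain ⟨α, hα⟩ := Submodule.mem_span_singleton.mp (hspan₁ ▸ hw₁)
  obtain ⟨β, hβ⟩ := Submodule.mem_span_singleton.mp (hspan₂ ▸ hw₂)
  have hdecomp : z = α • z₁ + β • z₂ := by rw [hα, hβ, add_sub_cancel]
  have hα0 : α = 0 := by
    have := congrFun hα p
    rw [Set.indicator_of_mem (mem_coe.mpr hp), hzp, Pi.smul_apply, smul_eq_mul] at this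
    exact (mul_eq_zero.mp this).resolve_right hz₁p
  have hβ0 : β = 0 := by
    have := congrFun hz v
    rw [hdecomp, hα0] at this
    simpa [mulVec_add, mulVec_smul, hGz₂, hs₂] using this
  rw [hdecomp, hα0, hβ0, zero_smul, zero_smul, add_zero]

theorem exists_apex_kernel_vector (hG : G.IsHermitian) {L : Finset (Fin k)} {v : Fin k}
    (hv : v ∈ L) (hnonadj : ∀ j ∉ L, ∀ i ∈ L.erase v, G j i = 0)
    (hell : ∀ S ⊆ L, S ≠ L → S ≠ L.erase v → (subm G S).PosDef)
    (hql : ¬ (subm G L).PosSemidef) (hk : finrank ℝ (kerOn G (L.erase v)) = 1) :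
    ∃ z ∈ kerOn G (L.erase v), ∃ p ∈ L.erase v, z p ≠ 0 ∧ kerOn G (L.erase v) = ℝ ∙ z ∧
      G *ᵥ z = Pi.single v ((G *ᵥ z) v) ∧ (G *ᵥ z) v ≠ 0 := by
  obtain ⟨z, hz, hz0⟩ := (Submodule.ne_bot_iff _).mp
    (Submodule.one_le_finrank_iff.mp hk.ge)
  obtain ⟨p, hzp⟩ := Function.ne_iff.mp hz0
  have hp : p ∈ L.erase v := ((mem_kerOn G).mp hz).1 hzp
  exact ⟨z, hz, p, hp, hzp, kerOn_eq_span_singleton hk hz hz0,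
    mulVec_eq_single_of_mem_kerOn hnonadj hz, mulVec_apex_ne_zero hG hv hp hell hql hz hzp⟩

theorem exists_kernel_vector_of_pyramid (hG : G.IsHermitian) {v : Fin k}
    {L₁ L₂ : Finset (Fin k)} (hv₁ : v ∈ L₁) (hv₂ : v ∈ L₂)
    (hunion : L₁ ∪ L₂ = univ) (hinter : L₁ ∩ L₂ = {v})
    (hnonadj : ∀ i ∈ L₁.erase v, ∀ j ∈ L₂.erase v, G i j = 0)
    (hell₁ : ∀ S ⊆ L₁, S ≠ L₁ → S ≠ L₁.erase v → (subm G S).PosDef)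
    (hell₂ : ∀ S ⊆ L₂, S ≠ L₂ → S ≠ L₂.erase v → (subm G S).PosDef)
    (hql₁ : ¬ (subm G L₁).PosSemidef) (hql₂ : ¬ (subm G L₂).PosSemidef)
    (hk₁ : finrank ℝ (kerOn G (L₁.erase v)) = 1) (hk₂ : finrank ℝ (kerOn G (L₂.erase v)) = 1) :
    ∃ p ∈ L₁.erase v, (∃ y ≠ 0, G *ᵥ y = 0) ∧ ∀ z, G *ᵥ z = 0 → z p = 0 → z = 0 := by
  have hunion' : L₂ ∪ L₁ = univ := union_comm L₁ L₂ ▸ hunion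
  obtain ⟨z₁, -, p, hp, hz₁p, hspan₁, hGz₁, hs₁⟩ := exists_apex_kernel_vector hG hv₁
    (fun j hj i hi => by
      simpa using (hG.apply i j).trans
        (hnonadj i hi j (mem_erase_of_notMem_of_union_eq_univ hunion hv₁ hj))) hell₁ hql₁ hk₁
  obtain ⟨z₂, hz₂, -, -, -, hspan₂, hGz₂, hs₂⟩ := exists_apex_kernel_vector hG hv₂
    (fun j hj i hi => hnonadj j (mem_erase_of_notMem_of_union_eq_univ hunion' hv₂ hj) i hi)
    hell₂ hql₂ hk₂
  have hz₂p : z₂ p = 0 := by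
    refine notMem_support.mp fun h => ne_of_mem_erase hp (mem_singleton.mp (hinter ▸ ?_))
    exact mem_inter.mpr ⟨mem_of_mem_erase hp, mem_of_mem_erase (((mem_kerOn G).mp hz₂).1 h)⟩
  have hcover : ∀ j, j ≠ v → j ∉ L₁.erase v → j ∈ L₂.erase v := fun j hjv hj =>
    mem_erase_of_notMem_of_union_eq_univ hunion hv₁ fun h => hj (mem_erase.mpr ⟨hjv, h⟩)
  refine ⟨p, hp, ⟨(G *ᵥ z₂) v • z₁ - (G *ᵥ z₁) v • z₂, fun hy => ?_, ?_⟩,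
    fun z hz hzp => eq_zero_of_mulVec_eq_zero_of_apply_eq_zero hG hcover hnonadj hspan₁ hspan₂
      hGz₁ hGz₂ hs₁ hs₂ hp hz₁p hz hzp⟩
  · have := congrFun hy p
    simp [hz₂p, hs₂, hz₁p] at this
  · rw [mulVec_sub, mulVec_smul, mulVec_smul, hGz₁, hGz₂]
    ext j
    simp only [Pi.sub_apply, Pi.smul_apply, Pi.single_apply, smul_eq_mul, Pi.zero_apply]
    split_ifs <;> ring

end Diagram

theorem finrank_kerOn_erase_eq_one {n : ℕ} {G : Matrix (Fin (n + 2)) (Fin (n + 2)) ℝ}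
    (hdiag : ∀ i, G i i = 1) {v : Fin (n + 2)} {L₁ L₂ : Finset (Fin (n + 2))}
    (hv₁ : v ∈ L₁) (hv₂ : v ∈ L₂) (hunion : L₁ ∪ L₂ = univ) (hinter : L₁ ∩ L₂ = {v})
    (hpar₁ : IsParabolic G (L₁.erase v)) (hpar₂ : IsParabolic G (L₂.erase v))
    (hql₁ : ¬ (subm G L₁).PosSemidef) (hql₂ : ¬ (subm G L₂).PosSemidef)
    (hranks : (subm G (L₁.erase v)).rank + (subm G (L₂.erase v)).rank = n - 1) :
    finrank ℝ (kerOn G (L₁.erase v)) = 1 ∧ finrank ℝ (kerOn G (L₂.erase v)) = 1 := by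
  have hcard := card_union_add_card_inter L₁ L₂
  rw [hunion, hinter, card_univ, Fintype.card_fin, card_singleton] at hcard
  have h₁ := rank_add_finrank_kerOn G (L₁.erase v)
  have h₂ := rank_add_finrank_kerOn G (L₂.erase v)
  have h₁' := hpar₁.one_le_finrank_kerOn (erase_nonempty_of_not_posSemidef hdiag hv₁ hql₁)
  have h₂' := hpar₂.one_le_finrank_kerOn (erase_nonempty_of_not_posSemidef hdiag hv₂ hql₂)
  rw [card_erase_of_mem hv₁] at h₁
  rw [card_erase_of_mem hv₂] at h₂
  omega

theorem pyramid_diagram_inertia_general {n : ℕ}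
    (G : Matrix (Fin (n + 2)) (Fin (n + 2)) ℝ) (hG : G.IsHermitian)
    (hdiag : ∀ i, G i i = 1)
    (v : Fin (n + 2)) (L₁ L₂ : Finset (Fin (n + 2)))
    (hv₁ : v ∈ L₁) (hv₂ : v ∈ L₂)
    (hunion : L₁ ∪ L₂ = Finset.univ) (hinter : L₁ ∩ L₂ = {v})
    (hnonadj : ∀ i ∈ L₁.erase v, ∀ j ∈ L₂.erase v, G i j = 0)
    (hpar₁ : IsParabolic G (L₁.erase v)) (hpar₂ : IsParabolic G (L₂.erase v))
    (hranks : (subm G (L₁.erase v)).rank + (subm G (L₂.erase v)).rank = n - 1)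
    (hell₁ : ∀ S ⊆ L₁, S ≠ L₁ → S ≠ L₁.erase v → (subm G S).PosDef)
    (hell₂ : ∀ S ⊆ L₂, S ≠ L₂ → S ≠ L₂.erase v → (subm G S).PosDef)
    (hql₁ : ¬ (subm G L₁).PosSemidef) (hql₂ : ¬ (subm G L₂).PosSemidef)
    (hvert : ∀ v₁ ∈ L₁.erase v, ∀ v₂ ∈ L₂.erase v,
      (subm G ((Finset.univ.erase v₁).erase v₂)).PosSemidef) :
    G.det = 0 ∧ posIndex hG = n ∧ negIndex hG = 1 ∧ nullIndex hG = 1 := by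
  obtain ⟨hk₁, hk₂⟩ := finrank_kerOn_erase_eq_one hdiag hv₁ hv₂ hunion hinter hpar₁ hpar₂
    hql₁ hql₂ hranks
  obtain ⟨p₁, hp₁, ⟨y, hy0, hy⟩, hker⟩ := exists_kernel_vector_of_pyramid hG hv₁ hv₂ hunion
    hinter hnonadj hell₁ hell₂ hql₁ hql₂ hk₁ hk₂
  obtain ⟨p₂, hp₂⟩ := erase_nonempty_of_not_posSemidef hdiag hv₂ hql₂
  set W := LinearMap.ker ((LinearMap.proj p₁).prod (LinearMap.proj p₂) :
    (Fin (n + 2) → ℝ) →ₗ[ℝ] ℝ × ℝ)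
  have hmemW : ∀ x ∈ W, x p₁ = 0 ∧ x p₂ = 0 := fun x hx => Prod.mk_eq_zero.mp hx
  obtain ⟨hpos, hneg, hnull⟩ := hG.inertia_eq_of_nonneg_of_finrank_add_two
    (fun h => hql₁ (h.submatrix _)) hy0 hy W
    (fun x hx => dotProduct_mulVec_nonneg_of_apply_eq_zero hG (hvert p₁ hp₁ p₂ hp₂)
      (hmemW x hx).1 (hmemW x hx).2)
    ((Submodule.eq_bot_iff _).mpr fun z hz => hker z hz.2 (hmemW z hz.1).1)
    (card_le_finrank_ker_prod_proj_add_two p₁ p₂)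
  rw [Fintype.card_fin] at hpos
  exact ⟨exists_mulVec_eq_zero_iff.mp ⟨y, hy0, hy⟩, by omega, hneg, hnull⟩

/-- From the proof of Lemma 3 (Section 4): let `Σ` be a Coxeter diagram on `n + 2` nodes
which is the union of two quasi-Lannér diagrams `L₁`, `L₂` meeting in a single node `v`,
with `L₁ \ v` and `L₂ \ v` parabolic, non-adjacent, of ranks summing to `n - 1`, every
subdiagram of `Lᵢ` other than `Lᵢ` and `Lᵢ \ v` elliptic, and `Σ \ {v₁, v₂}` elliptic or
parabolic (positive semidefinite) for all `v₁ ∈ L₁ \ v`, `v₂ ∈ L₂ \ v`. Then the Gram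
matrix has determinant `0` and inertia `(n, 1, 1)`. -/
theorem pyramid_diagram_inertia {n : ℕ}
    (G : Matrix (Fin (n + 2)) (Fin (n + 2)) ℝ) (hG : G.IsHermitian)
    (hdiag : ∀ i, G i i = 1)
    (hcox : ∀ i j, i ≠ j → G i j ≤ -1 ∨ ∃ m : ℕ, 2 ≤ m ∧ G i j = -Real.cos (Real.pi / m))
    (v : Fin (n + 2)) (L₁ L₂ : Finset (Fin (n + 2)))
    (hv₁ : v ∈ L₁) (hv₂ : v ∈ L₂)
    (hunion : L₁ ∪ L₂ = Finset.univ) (hinter : L₁ ∩ L₂ = {v})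
    (hnonadj : ∀ i ∈ L₁.erase v, ∀ j ∈ L₂.erase v, G i j = 0)
    (hpar₁ : IsParabolic G (L₁.erase v)) (hpar₂ : IsParabolic G (L₂.erase v))
    (hranks : (subm G (L₁.erase v)).rank + (subm G (L₂.erase v)).rank = n - 1)
    (hell₁ : ∀ S ⊆ L₁, S ≠ L₁ → S ≠ L₁.erase v → (subm G S).PosDef)
    (hell₂ : ∀ S ⊆ L₂, S ≠ L₂ → S ≠ L₂.erase v → (subm G S).PosDef)
    (hql₁ : ¬ (subm G L₁).PosSemidef) (hql₂ : ¬ (subm G L₂).PosSemidef)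
    (hvert : ∀ v₁ ∈ L₁.erase v, ∀ v₂ ∈ L₂.erase v,
      (subm G ((Finset.univ.erase v₁).erase v₂)).PosSemidef) :
    G.det = 0 ∧ posIndex hG = n ∧ negIndex hG = 1 ∧ nullIndex hG = 1 :=
  pyramid_diagram_inertia_general G hG hdiag v L₁ L₂ hv₁ hv₂ hunion hinter hnonadj hpar₁ hpar₂
    hranks hell₁ hell₂ hql₁ hql₂ hvert
end

section
/- Let Σ be a quasi-Lannér Coxeter diagram of order k (all proper subdiagrams elliptic or parabolic, Σ itself neither). Then the Gram matrix G(Σ) has signature (k−1, 1): exactly one negative eigenvalue and no kernel. -/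
/-!
The off-diagonal entries `-cos (π/m)` are nonpositive, and every codimension-one subdiagram is
elliptic or parabolic, so the Gram form is nonnegative on each coordinate hyperplane `x i = 0`.
That alone leaves room for at most one negative eigenvalue, and once some vector has negative
norm it rules out a kernel. Such a vector exists: otherwise `G` is positive semidefinite and
singular; for a kernel vector `x` the vector `|x|` has no larger norm, so it lies in the kernel
too, and by connectedness it has full support, which makes the diagram parabolic.
-/

open Matrix

open Finset

section QuadraticForm

variable {n : Type*} [Fintype n]

lemma dotProduct_mulVec_comm_of_isSymm {A : Matrix n n ℝ} (hA : A.IsSymm) (x y : n → ℝ) :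
    y ⬝ᵥ A *ᵥ x = x ⬝ᵥ A *ᵥ y := by
  rw [← dotProduct_transpose_mulVec, hA.eq]

/-- The combination `w = v i • u - u i • v` lies in the hyperplane `x i = 0`, and
`w ⬝ᵥ A *ᵥ w = (v i)² (u ⬝ᵥ A *ᵥ u) + (u i)² (v ⬝ᵥ A *ᵥ v)`. -/
lemma apply_eq_zero_of_nonneg_on_hyperplane {A : Matrix n n ℝ} (hA : A.IsSymm) {i : n}
    (hi : ∀ w : n → ℝ, w i = 0 → 0 ≤ w ⬝ᵥ A *ᵥ w) {u v : n → ℝ}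
    (hu : u ⬝ᵥ A *ᵥ u < 0) (hv : v ⬝ᵥ A *ᵥ v ≤ 0) (huv : u ⬝ᵥ A *ᵥ v = 0) : v i = 0 := by
  have hvu : v ⬝ᵥ A *ᵥ u = 0 := by rw [dotProduct_mulVec_comm_of_isSymm hA, huv]
  have hw := hi (v i • u - u i • v) (by simp [mul_comm])
  simp only [mulVec_sub, mulVec_smul, sub_dotProduct, dotProduct_sub, smul_dotProduct,
    dotProduct_smul, smul_eq_mul, huv, hvu] at hw
  have h : 0 ≤ v i * v i * (u ⬝ᵥ A *ᵥ u) := by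
    nlinarith [mul_nonneg (mul_self_nonneg (u i)) (neg_nonneg.mpr hv)]
  exact mul_self_eq_zero.mp
    (le_antisymm (nonpos_of_mul_nonneg_left h hu) (mul_self_nonneg _))

lemma eq_zero_of_mulVec_eq_zero_of_nonneg_on_hyperplanes {A : Matrix n n ℝ} (hA : A.IsSymm)
    (hhyp : ∀ (i : n) (w : n → ℝ), w i = 0 → 0 ≤ w ⬝ᵥ A *ᵥ w) {y : n → ℝ}
    (hy : y ⬝ᵥ A *ᵥ y < 0) {v : n → ℝ} (hv : A *ᵥ v = 0) : v = 0 :=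
  funext fun i => apply_eq_zero_of_nonneg_on_hyperplane hA (hhyp i) hy (by simp [hv])
    (by simp [hv])

variable [DecidableEq n]

lemma posIndex_add_negIndex_add_nullIndex {A : Matrix n n ℝ} (hA : A.IsHermitian) :
    posIndex hA + negIndex hA + nullIndex hA = Fintype.card n := by
  simp only [posIndex, negIndex, nullIndex, card_filter, ← sum_add_distrib]
  rw [← card_univ, card_eq_sum_ones]
  refine sum_congr rfl fun i _ => ?_
  rcases lt_trichotomy (hA.eigenvalues i) 0 with h | h | h
  · simp [h, h.not_gt, h.ne]
  · simp [h]
  · simp [h, h.not_gt, h.ne']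

lemma eigenvectorBasis_dotProduct {A : Matrix n n ℝ} (hA : A.IsHermitian) (a b : n) :
    ⇑(hA.eigenvectorBasis a) ⬝ᵥ ⇑(hA.eigenvectorBasis b) = if a = b then 1 else 0 := by
  have h := orthonormal_iff_ite.mp hA.eigenvectorBasis.orthonormal a b
  rw [dotProduct_comm]
  simpa [PiLp.inner_apply, dotProduct] using h

lemma eigenvectorBasis_dotProduct_mulVec {A : Matrix n n ℝ} (hA : A.IsHermitian) (a b : n) :
    ⇑(hA.eigenvectorBasis a) ⬝ᵥ A *ᵥ ⇑(hA.eigenvectorBasis b) =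
      if a = b then hA.eigenvalues b else 0 := by
  rw [hA.mulVec_eigenvectorBasis, dotProduct_smul, eigenvectorBasis_dotProduct, smul_eq_mul]
  split_ifs <;> simp

lemma negIndex_pos_of_dotProduct_mulVec_neg {A : Matrix n n ℝ} (hA : A.IsHermitian)
    {y : n → ℝ} (hy : y ⬝ᵥ A *ᵥ y < 0) : 0 < negIndex hA := by
  refine card_pos.mpr ?_
  by_contra hempty
  have hpsd : A.PosSemidef := hA.posSemidef_iff_eigenvalues_nonneg.mpr fun a =>
    not_lt.mp fun ha => hempty ⟨a, mem_filter.mpr ⟨mem_univ a, ha⟩⟩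
  have := hpsd.dotProduct_mulVec_nonneg y
  simp only [star_trivial] at this
  linarith

lemma negIndex_le_one_of_nonneg_on_hyperplane {A : Matrix n n ℝ} (hA : A.IsHermitian) (i : n)
    (hi : ∀ w : n → ℝ, w i = 0 → 0 ≤ w ⬝ᵥ A *ᵥ w) : negIndex hA ≤ 1 := by
  refine card_le_one.mpr fun a ha b hb => ?_
  by_contra hab
  have hea : hA.eigenvalues a < 0 := (mem_filter.mp ha).2
  have heb : hA.eigenvalues b < 0 := (mem_filter.mp hb).2
  have hvi : hA.eigenvectorBasis b i = 0 :=
    apply_eq_zero_of_nonneg_on_hyperplane (isHermitian_iff_isSymm.mp hA) hi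
      (u := hA.eigenvectorBasis a) (by simpa [eigenvectorBasis_dotProduct_mulVec] using hea)
      (by simpa [eigenvectorBasis_dotProduct_mulVec] using heb.le)
      (by simp [eigenvectorBasis_dotProduct_mulVec, hab])
  have := hi _ hvi
  simp only [eigenvectorBasis_dotProduct_mulVec, if_true] at this
  linarith

lemma nullIndex_eq_zero_of_nonneg_on_hyperplanes {A : Matrix n n ℝ} (hA : A.IsHermitian)
    (hhyp : ∀ (i : n) (w : n → ℝ), w i = 0 → 0 ≤ w ⬝ᵥ A *ᵥ w) {y : n → ℝ}
    (hy : y ⬝ᵥ A *ᵥ y < 0) : nullIndex hA = 0 := by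
  refine card_eq_zero.mpr (filter_eq_empty_iff.mpr fun b _ hb => ?_)
  have hv : ⇑(hA.eigenvectorBasis b) = 0 :=
    eq_zero_of_mulVec_eq_zero_of_nonneg_on_hyperplanes (isHermitian_iff_isSymm.mp hA) hhyp hy
      (by rw [hA.mulVec_eigenvectorBasis, hb, zero_smul])
  have := eigenvectorBasis_dotProduct hA b b
  simp [hv] at this

end QuadraticForm

section NonposOffDiag

variable {n : Type*} [Fintype n]

lemma dotProduct_mulVec_abs_le {A : Matrix n n ℝ} (hoff : ∀ i j, i ≠ j → A i j ≤ 0)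
    (x : n → ℝ) : |x| ⬝ᵥ A *ᵥ |x| ≤ x ⬝ᵥ A *ᵥ x := by
  simp only [dotProduct, mulVec, mul_sum, Pi.abs_apply]
  refine sum_le_sum fun i _ => sum_le_sum fun j _ => ?_
  rcases eq_or_ne i j with rfl | hij
  · rw [mul_left_comm, abs_mul_abs_self, mul_left_comm]
  · calc |x i| * (A i j * |x j|) = A i j * |x i * x j| := by rw [abs_mul]; ring
      _ ≤ A i j * (x i * x j) := mul_le_mul_of_nonpos_left (le_abs_self _) (hoff i j hij)
      _ = x i * (A i j * x j) := by ring

/-- A row `j` outside the support of `z` has `∑ₗ A j l * z l = 0` with all terms `≤ 0`, so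
`A j i = 0` for every `i` in the support: the support is a union of connected components. -/
lemma apply_ne_zero_of_mulVec_eq_zero {A : Matrix n n ℝ} (hA : A.IsSymm)
    (hoff : ∀ i j, i ≠ j → A i j ≤ 0)
    (hconn : ∀ S : Finset n, S.Nonempty → S ≠ univ → ∃ i ∈ S, ∃ j ∉ S, A i j ≠ 0)
    {z : n → ℝ} (hz : 0 ≤ z) (hz0 : z ≠ 0) (hAz : A *ᵥ z = 0) (i : n) : z i ≠ 0 := by
  classical
  intro hzi
  obtain ⟨a, hza⟩ := Function.ne_iff.mp hz0
  obtain ⟨a, ha, j, hj, hAaj⟩ := hconn {l | z l ≠ 0} ⟨a, by simpa using hza⟩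
    (ne_of_mem_of_not_mem' (mem_univ i) (by simpa using hzi)).symm
  simp only [mem_filter, mem_univ, true_and, not_not] at ha hj
  have hterms : ∀ l ∈ univ, A j l * z l ≤ 0 := fun l _ => by
    rcases eq_or_ne l j with rfl | hlj
    · rw [hj, mul_zero]
    · exact mul_nonpos_of_nonpos_of_nonneg (hoff j l hlj.symm) (hz l)
  have hrow : ∑ l, A j l * z l = 0 := congrFun hAz j
  have := (sum_eq_zero_iff_of_nonpos hterms).mp hrow a (mem_univ a)
  rw [hA.apply] at this
  exact (mul_ne_zero hAaj ha) this

end NonposOffDiag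

lemma neg_cos_pi_div_nonpos {m : ℕ} (hm : 2 ≤ m) : -Real.cos (Real.pi / m) ≤ 0 := by
  have hm' : (2 : ℝ) ≤ m := by exact_mod_cast hm
  refine neg_nonpos.mpr (Real.cos_nonneg_of_mem_Icc ⟨?_, ?_⟩)
  · linarith [Real.pi_pos, show 0 ≤ Real.pi / m by positivity]
  · rw [div_le_iff₀ (by linarith)]
    nlinarith [Real.pi_pos]

section Subdiagram

variable {k : ℕ}

lemma dotProduct_mulVec_subm (G : Matrix (Fin k) (Fin k) ℝ) (S : Finset (Fin k))
    {w : Fin k → ℝ} (hw : ∀ i ∉ S, w i = 0) :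
    (fun i : S => w i) ⬝ᵥ subm G S *ᵥ (fun i : S => w i) = w ⬝ᵥ G *ᵥ w := by
  have hsum : ∀ f : Fin k → ℝ, (∀ i ∉ S, f i = 0) → ∑ i : S, f i = ∑ i, f i := fun f hf => by
    rw [sum_coe_sort S f]
    exact sum_subset (subset_univ S) fun i _ hi => hf i hi
  simp only [dotProduct, mulVec, subm, submatrix_apply]
  rw [← hsum _ fun i hi => by rw [hw i hi, zero_mul]]
  exact sum_congr rfl fun i _ => congrArg _ (hsum (fun j => G i j * w j) fun j hj => by
    rw [hw j hj, mul_zero])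

lemma dotProduct_mulVec_nonneg_of_posSemidef_subm {G : Matrix (Fin k) (Fin k) ℝ}
    {S : Finset (Fin k)} (hS : (subm G S).PosSemidef) {w : Fin k → ℝ}
    (hw : ∀ i ∉ S, w i = 0) : 0 ≤ w ⬝ᵥ G *ᵥ w := by
  simpa [dotProduct_mulVec_subm G S hw] using hS.dotProduct_mulVec_nonneg fun i : S => w i

lemma isParabolic_univ_of_posSemidef {G : Matrix (Fin k) (Fin k) ℝ} (hG : G.PosSemidef)
    {z : Fin k → ℝ} (hz : G *ᵥ z = 0) (hsupp : ∀ i, z i ≠ 0) : IsParabolic G univ := by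
  let e : (univ : Finset (Fin k)) ≃ Fin k := Equiv.subtypeUnivEquiv mem_univ
  refine ⟨hG.submatrix _, fun i => ⟨z ∘ e, ?_, hsupp i⟩⟩
  have h := submatrix_mulVec_equiv G (z ∘ e) e e
  rwa [Function.comp_assoc, e.self_comp_symm, Function.comp_id, hz] at h

lemma exists_dotProduct_mulVec_neg {G : Matrix (Fin k) (Fin k) ℝ} (hG : G.IsHermitian)
    (hoff : ∀ i j, i ≠ j → G i j ≤ 0)
    (hconn : ∀ S : Finset (Fin k), S.Nonempty → S ≠ univ → ∃ i ∈ S, ∃ j ∉ S, G i j ≠ 0)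
    (hnotell : ¬ G.PosDef) (hnotpar : ¬ IsParabolic G univ) :
    ∃ y : Fin k → ℝ, y ⬝ᵥ G *ᵥ y < 0 := by
  by_contra! h
  have hpsd : G.PosSemidef := .of_dotProduct_mulVec_nonneg hG (by simpa using h)
  obtain ⟨x, hx0, hx⟩ : ∃ x ≠ 0, x ⬝ᵥ G *ᵥ x = 0 := by
    by_contra! hpos
    exact hnotell (.of_dotProduct_mulVec_pos hG fun x hx => by
      simpa using (h x).lt_of_ne (hpos x hx).symm)
  have hz : G *ᵥ |x| = 0 := (hpsd.dotProduct_mulVec_zero_iff _).mp <| by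
    simpa using le_antisymm (hx ▸ dotProduct_mulVec_abs_le hoff x) (h _)
  have hz0 : |x| ≠ 0 := by
    obtain ⟨i, hi⟩ := Function.ne_iff.mp hx0
    exact Function.ne_iff.mpr ⟨i, by simpa using hi⟩
  exact hnotpar (isParabolic_univ_of_posSemidef hpsd hz
    (apply_ne_zero_of_mulVec_eq_zero (isHermitian_iff_isSymm.mp hG) hoff hconn (abs_nonneg x)
      hz0 hz))

lemma nonneg_on_hyperplanes_of_proper {G : Matrix (Fin k) (Fin k) ℝ}
    (hproper : ∀ S : Finset (Fin k), S ≠ univ → (subm G S).PosDef ∨ IsParabolic G S)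
    (i : Fin k) (w : Fin k → ℝ) (hwi : w i = 0) : 0 ≤ w ⬝ᵥ G *ᵥ w := by
  refine dotProduct_mulVec_nonneg_of_posSemidef_subm
    ((hproper _ (univ.erase_ssubset (mem_univ i)).ne).elim PosDef.posSemidef And.left) ?_
  intro j hj
  rwa [of_not_not fun hji => hj (mem_erase.mpr ⟨hji, mem_univ j⟩)]

end Subdiagram

theorem quasi_lanner_signature_general {k : ℕ}
    (G : Matrix (Fin k) (Fin k) ℝ) (hG : G.IsHermitian)
    (hcox : ∀ i j, i ≠ j → ∃ m : ℕ, 2 ≤ m ∧ G i j = -Real.cos (Real.pi / m))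
    (hconn : ∀ S : Finset (Fin k), S.Nonempty → S ≠ Finset.univ →
      ∃ i ∈ S, ∃ j ∉ S, G i j ≠ 0)
    (hproper : ∀ S : Finset (Fin k), S ≠ Finset.univ →
      (subm G S).PosDef ∨ IsParabolic G S)
    (hnotell : ¬ G.PosDef) (hnotpar : ¬ IsParabolic G Finset.univ) :
    posIndex hG = k - 1 ∧ negIndex hG = 1 ∧ nullIndex hG = 0 := by
  have hoff : ∀ i j, i ≠ j → G i j ≤ 0 := fun i j hij => by
    obtain ⟨m, hm, hGij⟩ := hcox i j hij
    exact hGij ▸ neg_cos_pi_div_nonpos hm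
  have hplane := nonneg_on_hyperplanes_of_proper hproper
  obtain ⟨y, hy⟩ := exists_dotProduct_mulVec_neg hG hoff hconn hnotell hnotpar
  obtain ⟨i, -⟩ := Function.ne_iff.mp (show y ≠ 0 by rintro rfl; simp at hy)
  have hneg : negIndex hG = 1 :=
    le_antisymm (negIndex_le_one_of_nonneg_on_hyperplane hG i (hplane i))
      (negIndex_pos_of_dotProduct_mulVec_neg hG hy)
  have hnull := nullIndex_eq_zero_of_nonneg_on_hyperplanes hG hplane hy
  have hcard := posIndex_add_negIndex_add_nullIndex hG
  rw [Fintype.card_fin] at hcard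
  omega

/-- The Gram matrix of a quasi-Lannér diagram of order `k` — a connected Coxeter diagram
(unit diagonal, off-diagonal entries `-cos (π/m)`, `m ≥ 2`) which is neither elliptic
(positive definite) nor parabolic, all of whose proper subdiagrams are elliptic or
parabolic — has signature `(k - 1, 1)`: exactly one negative eigenvalue and no kernel. -/
theorem quasi_lanner_signature {k : ℕ}
    (G : Matrix (Fin k) (Fin k) ℝ) (hG : G.IsHermitian)
    (hdiag : ∀ i, G i i = 1)
    (hcox : ∀ i j, i ≠ j → ∃ m : ℕ, 2 ≤ m ∧ G i j = -Real.cos (Real.pi / m))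
    (hconn : ∀ S : Finset (Fin k), S.Nonempty → S ≠ Finset.univ →
      ∃ i ∈ S, ∃ j ∉ S, G i j ≠ 0)
    (hproper : ∀ S : Finset (Fin k), S ≠ Finset.univ →
      (subm G S).PosDef ∨ IsParabolic G S)
    (hnotell : ¬ G.PosDef) (hnotpar : ¬ IsParabolic G Finset.univ) :
    posIndex hG = k - 1 ∧ negIndex hG = 1 ∧ nullIndex hG = 0 :=
  quasi_lanner_signature_general G hG hcox hconn hproper hnotell hnotpar
end
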